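/- Two graph homomorphisms f, g : G → H are ×-homotopic if and only if f and g lie in the same connected component of the poset Hom(G,H) (i.e., they are connected by a zigzag of comparabilities in the poset). -/

import Mathlib

/-- A graph: a symmetric relation on a vertex set, loops allowed. -/
structure SymGraph (V : Type) : Type where
  Adj : V → V → Prop
  symm : ∀ u v : V, Adj u v → Adj v u

/-- A graph homomorphism: a vertex map preserving adjacency. -/
def SymGraph.IsHom {V W : Type} (G : SymGraph V) (H : SymGraph W) (f : V → W) : Prop :=
  ∀ u v : V, G.Adj u v → H.Adj (f u) (f v)

/-- The categorical product of graphs. -/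
def SymGraph.prod {V W : Type} (G : SymGraph V) (H : SymGraph W) : SymGraph (V × W) :=
  ⟨fun p q => G.Adj p.1 q.1 ∧ H.Adj p.2 q.2,
   fun p q h => ⟨G.symm _ _ h.1, H.symm _ _ h.2⟩⟩

/-- The categorical exponential graph `H^G`: vertices are all functions `V(G) → V(H)`. -/
def SymGraph.exp {V W : Type} (G : SymGraph V) (H : SymGraph W) : SymGraph (V → W) :=
  ⟨fun f f' => ∀ v v' : V, G.Adj v v' → H.Adj (f v) (f' v'),
   fun f f' h v v' hvv' => H.symm _ _ (h v' v (G.symm _ _ hvv'))⟩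

/-- Multihomomorphisms between graphs. -/
def SymGraph.IsMultiHom {V W : Type} (G : SymGraph V) (H : SymGraph W) (η : V → Set W) : Prop :=
  (∀ v, (η v).Nonempty) ∧
    ∀ x y : V, G.Adj x y → ∀ x' ∈ η x, ∀ y' ∈ η y, H.Adj x' y'

/-- The Hom poset, ordered by pointwise containment. -/
def MultiHom {V W : Type} (G : SymGraph V) (H : SymGraph W) : Type :=
  {η : V → Set W // SymGraph.IsMultiHom G H η}

instance {V W : Type} (G : SymGraph V) (H : SymGraph W) : PartialOrder (MultiHom G H) :=
  Subtype.partialOrder _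

/-- The reflexive path `Iₙ` on `{0, …, n}`. -/
def pathGraph (n : ℕ) : SymGraph (Fin (n + 1)) :=
  ⟨fun i j => (i : ℕ) = j ∨ (i : ℕ) + 1 = j ∨ (j : ℕ) + 1 = i,
   fun i j h => by tauto⟩

/-- ×-homotopy of vertex maps. -/
def Homotopic {V W : Type} (G : SymGraph V) (H : SymGraph W) (f g : V → W) : Prop :=
  ∃ n : ℕ, 1 ≤ n ∧ ∃ F : V × Fin (n + 1) → W,
    (G.prod (pathGraph n)).IsHom H F ∧
    (∀ v, F (v, 0) = f v) ∧ (∀ v, F (v, Fin.last n) = g v)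

/-- The singleton-valued multihomomorphism associated to a graph homomorphism. -/
def singletonMH {V W : Type} {G : SymGraph V} {H : SymGraph W} (f : V → W)
    (hf : G.IsHom H f) : MultiHom G H :=
  ⟨fun v => {f v},
   ⟨fun v => ⟨f v, rfl⟩, fun x y hxy x' hx' y' hy' => by
      simp only [Set.mem_singleton_iff] at hx' hy'
      subst hx'; subst hy'; exact hf _ _ hxy⟩⟩

/-- Disjoint union (coproduct) of graphs. -/
def SymGraph.coprod {V W : Type} (G : SymGraph V) (H : SymGraph W) : SymGraph (V ⊕ W) :=
  ⟨Sum.LiftRel G.Adj H.Adj,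
   fun u v h => by
    cases h with
    | inl h => exact Sum.LiftRel.inl (G.symm _ _ h)
    | inr h => exact Sum.LiftRel.inr (H.symm _ _ h)⟩

/-- The induced subgraph obtained by deleting the vertex `v`. -/
def SymGraph.deleteVert {V : Type} (G : SymGraph V) (v : V) : SymGraph {x : V // x ≠ v} :=
  ⟨fun a b => G.Adj a.1 b.1, fun a b h => G.symm _ _ h⟩

/-- The cartesian (box) product of graphs. -/
def SymGraph.box {V W : Type} (G : SymGraph V) (H : SymGraph W) : SymGraph (V × W) :=
  ⟨fun p q => (G.Adj p.1 q.1 ∧ p.2 = q.2) ∨ (p.1 = q.1 ∧ H.Adj p.2 q.2),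
   fun p q h => by
    rcases h with ⟨h1, h2⟩ | ⟨h1, h2⟩
    · exact Or.inl ⟨G.symm _ _ h1, h2.symm⟩
    · exact Or.inr ⟨h1.symm, H.symm _ _ h2⟩⟩

/-- The cartesian exponential graph: vertices are the graph homomorphisms. -/
def SymGraph.cartExp {V W : Type} (G : SymGraph V) (H : SymGraph W) :
    SymGraph {f : V → W // G.IsHom H f} :=
  ⟨fun f f' => ∀ b, H.Adj (f.1 b) (f'.1 b), fun f f' h b => H.symm _ _ (h b)⟩

/-- A ×-homotopy equivalence of graphs. -/
def HtpyEquiv {V W : Type} (G : SymGraph V) (H : SymGraph W) (f : V → W) : Prop :=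
  G.IsHom H f ∧ ∃ g : W → V, H.IsHom G g ∧
    Homotopic G G (g ∘ f) id ∧ Homotopic H H (f ∘ g) id

/-- The one-point looped graph. -/
def oneGraph : SymGraph Unit := ⟨fun _ _ => True, fun _ _ _ => trivial⟩


/-!
A ×-homotopy `F : G × Iₙ → H` is the same as a walk `F(·,0), …, F(·,n)` of length `n` through
looped vertices (homomorphisms) of the exponential graph `H^G`. Two such neighbours `a`, `b` are
joined in `Hom(G,H)` by `{a} ≤ (v ↦ {a v, b v}) ≥ {b}`. Conversely, selections from two
comparable multihomomorphisms are both selections from the larger one, hence neighbours in `H^G`;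
choosing a selection at every step of a zigzag in `Hom(G,H)` therefore yields a walk.
-/

namespace SymGraph

variable {V W : Type} {G : SymGraph V} {H : SymGraph W}

def HomAdj (G : SymGraph V) (H : SymGraph W) (a b : V → W) : Prop :=
  G.IsHom H a ∧ G.IsHom H b ∧ (G.exp H).Adj a b

theorem HomAdj.symm {a b : V → W} (h : HomAdj G H a b) : HomAdj G H b a :=
  ⟨h.2.1, h.1, (G.exp H).symm _ _ h.2.2⟩

end SymGraph

open SymGraph

section Homotopy

variable {V W : Type} {G : SymGraph V} {H : SymGraph W}

theorem Homotopic.refl {f : V → W} (hf : G.IsHom H f) : Homotopic G H f f :=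
  ⟨1, le_rfl, fun p => f p.1, fun _ _ h => hf _ _ h.1, fun _ => rfl, fun _ => rfl⟩

theorem Homotopic.tail {f a b : V → W} (hfa : Homotopic G H f a) (hab : HomAdj G H a b) :
    Homotopic G H f b := by
  obtain ⟨n, -, F, hF, hF0, hFn⟩ := hfa
  refine ⟨n + 1, Nat.le_add_left 1 n,
    fun p => Fin.lastCases (b p.1) (fun i => F (p.1, i)) p.2, ?_, fun v => ?_, fun v => ?_⟩
  · rintro ⟨v, i⟩ ⟨v', j⟩ ⟨hvv', hij⟩
    induction i using Fin.lastCases with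
    | last =>
      induction j using Fin.lastCases with
      | last => simpa using hab.2.1 v v' hvv'
      | cast j =>
        have hj : j = Fin.last n := by simp [pathGraph, Fin.ext_iff] at hij ⊢; omega
        simpa [hj, hFn] using hab.symm.2.2 v v' hvv'
    | cast i =>
      induction j using Fin.lastCases with
      | last =>
        have hi : i = Fin.last n := by simp [pathGraph, Fin.ext_iff] at hij ⊢; omega
        simpa [hi, hFn] using hab.2.2 v v' hvv'
      | cast j => simpa using hF (v, i) (v', j) ⟨hvv', by simpa [pathGraph] using hij⟩
  · exact (Fin.lastCases_castSucc (i := 0)).trans (hF0 v)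
  · simp

theorem Homotopic.of_reflTransGen {f g : V → W} (hf : G.IsHom H f)
    (h : Relation.ReflTransGen (HomAdj G H) f g) : Homotopic G H f g := by
  induction h with
  | refl => exact Homotopic.refl hf
  | tail _ hab ih => exact ih.tail hab

theorem Homotopic.reflTransGen {f g : V → W} (h : Homotopic G H f g) :
    Relation.ReflTransGen (HomAdj G H) f g := by
  obtain ⟨n, -, F, hF, hF0, hFn⟩ := h
  let slice : Fin (n + 1) → V → W := fun i v => F (v, i)
  have chain : ∀ i, Relation.ReflTransGen (HomAdj G H) (slice 0) (slice i) := by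
    intro i
    induction i using Fin.induction with
    | zero => exact .refl
    | succ i ih =>
      refine ih.tail ⟨fun u v huv => hF _ _ ⟨huv, Or.inl rfl⟩,
        fun u v huv => hF _ _ ⟨huv, Or.inl rfl⟩, fun u v huv => hF _ _ ⟨huv, ?_⟩⟩
      simp [pathGraph]
  have h0 : slice 0 = f := funext hF0
  have hn : slice (Fin.last n) = g := funext hFn
  simpa [h0, hn] using chain (Fin.last n)

theorem homotopic_iff_reflTransGen_homAdj {f g : V → W} (hf : G.IsHom H f) :
    Homotopic G H f g ↔ Relation.ReflTransGen (HomAdj G H) f g :=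
  ⟨Homotopic.reflTransGen, Homotopic.of_reflTransGen hf⟩

end Homotopy

namespace MultiHom

variable {V W : Type} {G : SymGraph V} {H : SymGraph W}

theorem isHom_of_mem {η : MultiHom G H} {a : V → W} (ha : ∀ v, a v ∈ η.1 v) : G.IsHom H a :=
  fun u v huv => η.2.2 u v huv _ (ha u) _ (ha v)

theorem homAdj_of_le {η θ : MultiHom G H} (hηθ : η ≤ θ) {a b : V → W}
    (ha : ∀ v, a v ∈ η.1 v) (hb : ∀ v, b v ∈ θ.1 v) : HomAdj G H a b :=
  have ha' : ∀ v, a v ∈ θ.1 v := fun v => hηθ v (ha v)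
  ⟨isHom_of_mem ha', isHom_of_mem hb, fun u v huv => θ.2.2 u v huv _ (ha' u) _ (hb v)⟩

theorem homAdj_of_symmGen {η θ : MultiHom G H} (hηθ : Relation.SymmGen (· ≤ ·) η θ)
    {a b : V → W} (ha : ∀ v, a v ∈ η.1 v) (hb : ∀ v, b v ∈ θ.1 v) : HomAdj G H a b :=
  hηθ.elim (homAdj_of_le · ha hb) (fun h => (homAdj_of_le h hb ha).symm)

def pair {a b : V → W} (hab : HomAdj G H a b) : MultiHom G H :=
  ⟨fun v => {a v, b v}, fun v => ⟨a v, Or.inl rfl⟩, by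
    rintro x y hxy _ (rfl | rfl) _ (rfl | rfl)
    exacts [hab.1 x y hxy, hab.2.2 x y hxy, hab.symm.2.2 x y hxy, hab.2.1 x y hxy]⟩

theorem singletonMH_le_pair_left {a b : V → W} (hab : HomAdj G H a b) :
    singletonMH a hab.1 ≤ pair hab :=
  fun _ => Set.singleton_subset_iff.2 (Set.mem_insert _ _)

theorem singletonMH_le_pair_right {a b : V → W} (hab : HomAdj G H a b) :
    singletonMH b hab.2.1 ≤ pair hab :=
  fun _ => Set.singleton_subset_iff.2 (Set.mem_insert_of_mem _ rfl)

theorem reflTransGen_symmGen_singletonMH {f g : V → W} (hf : G.IsHom H f) (hg : G.IsHom H g)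
    (h : Relation.ReflTransGen (HomAdj G H) f g) :
    Relation.ReflTransGen (Relation.SymmGen (· ≤ ·)) (singletonMH f hf) (singletonMH g hg) := by
  induction h with
  | refl => exact .refl
  | tail _ hab ih =>
    exact ((ih hab.1).tail (Or.inl (singletonMH_le_pair_left hab))).tail
      (Or.inr (singletonMH_le_pair_right hab))

theorem reflTransGen_homAdj_of_mem {η θ : MultiHom G H}
    (h : Relation.ReflTransGen (Relation.SymmGen (· ≤ ·)) η θ) {a b : V → W}
    (ha : ∀ v, a v ∈ η.1 v) (hb : ∀ v, b v ∈ θ.1 v) :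
    Relation.ReflTransGen (HomAdj G H) a b := by
  induction h generalizing b with
  | refl => exact .single (homAdj_of_le le_rfl ha hb)
  | @tail κ θ _ hκθ ih =>
    have hc : ∀ v, (κ.2.1 v).some ∈ κ.1 v := fun v => (κ.2.1 v).some_mem
    exact (ih hc).tail (homAdj_of_symmGen hκθ hc hb)

theorem reflTransGen_homAdj_iff_reflTransGen_singletonMH {f g : V → W} (hf : G.IsHom H f)
    (hg : G.IsHom H g) :
    Relation.ReflTransGen (HomAdj G H) f g ↔
      Relation.ReflTransGen (Relation.SymmGen (· ≤ ·)) (singletonMH f hf) (singletonMH g hg) :=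
  ⟨reflTransGen_symmGen_singletonMH hf hg,
    fun h => reflTransGen_homAdj_of_mem h (fun _ => rfl) (fun _ => rfl)⟩

end MultiHom

/-- ×-homotopy coincides with connectedness in the Hom poset. -/
theorem stmt_13 {V W : Type} (G : SymGraph V) (H : SymGraph W) (f g : V → W)
    (hf : G.IsHom H f) (hg : G.IsHom H g) :
    Homotopic G H f g ↔
      Relation.ReflTransGen
        (fun a b : MultiHom G H => a ≤ b ∨ b ≤ a)
        (singletonMH f hf) (singletonMH g hg) :=
  (homotopic_iff_reflTransGen_homAdj hf).trans
    (MultiHom.reflTransGen_homAdj_iff_reflTransGen_singletonMH hf hg)
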